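/- Let W be a B-DMC, N = 2^n, ℱ ⊆ {1,…,N} a frozen set and 𝒜 = ℱ^c. Let U₁^N be uniformly distributed on {0,1}^N and let Y₁^N be generated from U₁^N through the combined channel W_N. Then the block error probability of the successive cancellation decoder (equivalently, the block error probability of the polar code averaged over uniformly random choices of the frozen vector u_ℱ and uniformly random message bits u_𝒜) satisfies P(Û_𝒜 ≠ U_𝒜) ≤ Σ_{i∈𝒜} Z(W_N^{(i)}). -/

import Mathlib

open scoped BigOperators

/-- A binary-input discrete memoryless channel (B-DMC). -/
def IsBDMC {Y : Type*} [Fintype Y] (W : ZMod 2 → Y → ℝ) : Prop :=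
  (∀ x y, 0 ≤ W x y) ∧ ∀ x, ∑ y, W x y = 1

/-- Bhattacharyya parameter `Z(W)`. -/
noncomputable def bhatt {Y : Type*} [Fintype Y] (W : ZMod 2 → Y → ℝ) : ℝ :=
  ∑ y, Real.sqrt (W 0 y * W 1 y)

/-- Symmetric capacity `I(W)` (in bits); terms with `W x y = 0` contribute `0`
thanks to the convention `Real.log 0 = 0` and the multiplicative factor `W x y`. -/
noncomputable def symCap {Y : Type*} [Fintype Y] (W : ZMod 2 → Y → ℝ) : ℝ :=
  ∑ x : ZMod 2, ∑ y, (1 / 2) * W x y *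
    Real.logb 2 (W x y / ((1 / 2) * W 0 y + (1 / 2) * W 1 y))

/-- The bit-reversal permutation on `Fin (2^n)`. -/
def bitRev (n : ℕ) (i : Fin (2 ^ n)) : Fin (2 ^ n) :=
  ⟨(∑ k ∈ Finset.range n, if Nat.testBit i.val k then 2 ^ (n - 1 - k) else 0) % 2 ^ n,
    Nat.mod_lt _ (Nat.pow_pos (by norm_num))⟩

/-- The generator matrix `B_N F^{⊗n}` over `𝔽₂`, where `F = [[1,0],[1,1]]`:
the `(i,j)` entry of `F^{⊗n}` is `1` iff every binary digit of `j` is dominated by the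
corresponding digit of `i`, and `B_N` acts by bit reversal on the row index. -/
def polarGen (n : ℕ) : Matrix (Fin (2 ^ n)) (Fin (2 ^ n)) (ZMod 2) :=
  fun i j =>
    if ∀ k < n, j.val.testBit k = true → (bitRev n i).val.testBit k = true then 1 else 0

/-- The polar encoding `x = u · B_N F^{⊗n}` over `𝔽₂`. -/
def polarEnc (n : ℕ) (u : Fin (2 ^ n) → ZMod 2) : Fin (2 ^ n) → ZMod 2 :=
  fun j => ∑ i, u i * polarGen n i j

/-- The combined channel `W_N(y₁^N | u₁^N) = Π_i W(y_i | x_i)`, `x = u·B_N F^{⊗n}`. -/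
noncomputable def combinedCh {Y : Type*} [Fintype Y] (n : ℕ) (W : ZMod 2 → Y → ℝ)
    (u : Fin (2 ^ n) → ZMod 2) (y : Fin (2 ^ n) → Y) : ℝ :=
  ∏ i, W (polarEnc n u i) (y i)

/-- The split channel `W_N^{(i)}(y₁^N, u₁^{i-1} | u_i)`; it is a B-DMC with input
`u_i` and output `(y₁^N, u₁^{i-1})`.  (Indices are `0`-based: the channel `W_N^{(i)}`
of the paper, `i = 1, …, N`, is `splitCh n W ⟨i-1, _⟩` here.) -/
noncomputable def splitCh {Y : Type*} [Fintype Y] (n : ℕ) (W : ZMod 2 → Y → ℝ)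
    (i : Fin (2 ^ n)) (b : ZMod 2) (o : (Fin (2 ^ n) → Y) × (Fin i.val → ZMod 2)) : ℝ :=
  ∑ u : Fin (2 ^ n) → ZMod 2,
    if (∀ j : Fin i.val, u ⟨j.val, j.isLt.trans i.isLt⟩ = o.2 j) ∧ u i = b then
      (2 : ℝ) ^ (-((2 ^ n : ℤ) - 1)) * combinedCh n W u o.1
    else 0

/-- Arıkan's successive cancellation (SC) decoder: given the frozen set `F`, frozen
values `uf` (only its values on `F` matter), and the channel output `y`, it outputs
`û_i = uf_i` for `i ∈ F`, and for `i ∉ F` it outputs `0` if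
`W_N^{(i)}(y, û₁^{i-1} | 0) ≥ W_N^{(i)}(y, û₁^{i-1} | 1)` and `1` otherwise. -/
noncomputable def scDecode {Y : Type*} [Fintype Y] (n : ℕ) (W : ZMod 2 → Y → ℝ)
    (F : Finset (Fin (2 ^ n))) (uf : Fin (2 ^ n) → ZMod 2) (y : Fin (2 ^ n) → Y)
    (i : Fin (2 ^ n)) : ZMod 2 :=
  if i ∈ F then uf i
  else if splitCh n W i 1
          (y, fun j : Fin i.val => scDecode n W F uf y ⟨j.val, j.isLt.trans i.isLt⟩) ≤
        splitCh n W i 0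
          (y, fun j : Fin i.val => scDecode n W F uf y ⟨j.val, j.isLt.trans i.isLt⟩)
    then 0 else 1
termination_by i.val
decreasing_by all_goals exact j.isLt

/-!
Arıkan's argument. Run the decoder with the frozen values taken from `u` itself. If it errs on
`𝒜`, then at the first erroneous index `i` it has seen the true prefix `u₁^{i-1}`, so the event
`Eᵢ : W_N^{(i)}(y, u₁^{i-1} | uᵢ) ≤ W_N^{(i)}(y, u₁^{i-1} | uᵢ + 1)` has occurred. By the union
bound the block error probability is at most `∑_{i ∈ 𝒜} P(Eᵢ)`. As `(Y₁^N, U₁^{i-1}, Uᵢ)` has joint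
law `½ W_N^{(i)}`, `P(Eᵢ)` is the maximum-likelihood error probability of `W_N^{(i)}`, and that is
at most `Z(W_N^{(i)})` because `a ≤ √(a b)` whenever `0 ≤ a ≤ b`.
-/

section BinaryChannel

variable {O : Type*} [Fintype O]

lemma ZMod.sum_univ_two {M : Type*} [AddCommMonoid M] (f : ZMod 2 → M) :
    ∑ b : ZMod 2, f b = f 0 + f 1 :=
  Fin.sum_univ_two f

lemma ZMod.eq_zero_or_eq_one (b : ZMod 2) : b = 0 ∨ b = 1 := by
  revert b; decide

lemma le_ite_add_one_of_ite_ne {V : ZMod 2 → ℝ} {b : ZMod 2}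
    (h : (if V 1 ≤ V 0 then 0 else 1) ≠ b) : V b ≤ V (b + 1) := by
  rcases ZMod.eq_zero_or_eq_one b with rfl | rfl
  · rw [zero_add]
    exact le_of_not_ge fun hle => h (if_pos hle)
  · rw [show (1 + 1 : ZMod 2) = 0 from rfl]
    by_contra hlt
    exact h (if_neg hlt)

/-- Error probability of maximum-likelihood decoding of `V` under uniform input, ties counted
as errors. -/
noncomputable def mlErrorProb (V : ZMod 2 → O → ℝ) : ℝ :=
  ∑ o, ∑ b, if V b o ≤ V (b + 1) o then 1 / 2 * V b o else 0

lemma Real.le_sqrt_mul_of_le {a b : ℝ} (ha : 0 ≤ a) (hab : a ≤ b) : a ≤ √(a * b) :=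
  Real.le_sqrt_of_sq_le (by nlinarith)

lemma mlErrorProb_le_bhatt {V : ZMod 2 → O → ℝ} (hV : ∀ b o, 0 ≤ V b o) :
    mlErrorProb V ≤ bhatt V := by
  refine Finset.sum_le_sum fun o _ => ?_
  rw [ZMod.sum_univ_two, show (0 + 1 : ZMod 2) = 1 from rfl, show (1 + 1 : ZMod 2) = 0 from rfl]
  have h0 := hV 0 o
  have h1 := hV 1 o
  have hs := Real.sqrt_nonneg (V 0 o * V 1 o)
  split_ifs with h01 h10 h10
  · linarith [Real.le_sqrt_mul_of_le h0 h01]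
  · linarith [Real.le_sqrt_mul_of_le h0 h01]
  · linarith [mul_comm (V 0 o) (V 1 o) ▸ Real.le_sqrt_mul_of_le h1 h10]
  · linarith

end BinaryChannel

lemma ite_le_sum_ite {ι M : Type*} [AddCommMonoid M] [PartialOrder M] [IsOrderedAddMonoid M]
    {s : Finset ι} {A : Prop} [Decidable A] {Q : ι → Prop} [DecidablePred Q] {p : M} (hp : 0 ≤ p) (h : A → ∃ i ∈ s, Q i) :
    (if A then p else 0) ≤ ∑ i ∈ s, if Q i then p else 0 := by
  have hnonneg : ∀ i ∈ s, 0 ≤ if Q i then p else 0 := fun i _ => by split_ifs <;> simp [hp]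
  split_ifs with hA
  · obtain ⟨i, hi, hQ⟩ := h hA
    simpa [hQ] using Finset.single_le_sum hnonneg hi
  · exact Finset.sum_nonneg hnonneg

section Polar

variable {Y : Type*} [Fintype Y] {n : ℕ} {W : ZMod 2 → Y → ℝ}

def prefixAt {α : Type*} {N : ℕ} (u : Fin N → α) (i : Fin N) : Fin i.val → α :=
  fun j => u ⟨j.val, j.isLt.trans i.isLt⟩

lemma scDecode_eq (F : Finset (Fin (2 ^ n))) (uf : Fin (2 ^ n) → ZMod 2)
    (y : Fin (2 ^ n) → Y) (i : Fin (2 ^ n)) :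
    scDecode n W F uf y i =
      if i ∈ F then uf i
      else if splitCh n W i 1 (y, prefixAt (scDecode n W F uf y) i) ≤
          splitCh n W i 0 (y, prefixAt (scDecode n W F uf y) i) then 0 else 1 := by
  rw [scDecode]; rfl

lemma exists_splitCh_le_of_scDecode_ne {F : Finset (Fin (2 ^ n))} {u : Fin (2 ^ n) → ZMod 2}
    {y : Fin (2 ^ n) → Y} (h : ∃ i ∈ Fᶜ, scDecode n W F u y i ≠ u i) :
    ∃ i ∈ Fᶜ, splitCh n W i (u i) (y, prefixAt u i) ≤
      splitCh n W i (u i + 1) (y, prefixAt u i) := by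
  obtain ⟨i₀, -, hi₀⟩ := h
  obtain ⟨i, hi, hmin⟩ := WellFounded.has_min wellFounded_lt
    {i | scDecode n W F u y i ≠ u i} ⟨i₀, hi₀⟩
  have hiF : i ∉ F := fun hF => hi (by rw [scDecode_eq, if_pos hF])
  have hprefix : prefixAt (scDecode n W F u y) i = prefixAt u i := funext fun j =>
    not_not.mp fun hj => hmin _ hj (Fin.mk_lt_of_lt_val j.isLt)
  refine ⟨i, Finset.mem_compl.mpr hiF, le_ite_add_one_of_ite_ne
    (V := fun b => splitCh n W i b (y, prefixAt u i)) ?_⟩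
  simpa [scDecode_eq, hiF, hprefix] using hi

lemma inv_two_pow_two_pow (n : ℕ) :
    ((2 : ℝ) ^ (2 ^ n : ℕ))⁻¹ = 1 / 2 * (2 : ℝ) ^ (-((2 ^ n : ℤ) - 1)) := by
  rw [← zpow_natCast, ← zpow_neg, one_div, ← zpow_neg_one, ← zpow_add₀ two_ne_zero]
  push_cast
  ring_nf

/-- `(Y₁^N, U₁^{i-1}, Uᵢ)` has joint law `½ W_N^{(i)}` when `U₁^N` is uniform. -/
lemma sum_mul_combinedCh_eq_sum_mul_splitCh (i : Fin (2 ^ n))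
    (φ : (Fin (2 ^ n) → Y) × (Fin i.val → ZMod 2) → ZMod 2 → ℝ) :
    ∑ u, ∑ y, φ (y, prefixAt u i) (u i) * (((2 : ℝ) ^ (2 ^ n : ℕ))⁻¹ * combinedCh n W u y) =
      ∑ o, ∑ b, φ o b * (1 / 2 * splitCh n W i b o) := by
  have hcond : ∀ u (o : (Fin (2 ^ n) → Y) × (Fin i.val → ZMod 2)) b,
      ((∀ j : Fin i.val, u ⟨j.val, j.isLt.trans i.isLt⟩ = o.2 j) ∧ u i = b) ↔
        (b = u i ∧ o.2 = prefixAt u i) := fun u o b => by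
    rw [and_comm, funext_iff]; exact and_congr eq_comm (forall_congr' fun _ => eq_comm)
  simp only [splitCh, hcond, Finset.mul_sum, mul_ite, mul_zero]
  conv_rhs => enter [2, o]; rw [Finset.sum_comm]
  conv_rhs => rw [Finset.sum_comm]
  refine Finset.sum_congr rfl fun u _ => ?_
  rw [Fintype.sum_prod_type]
  refine Finset.sum_congr rfl fun y _ => ?_
  simp only [ite_and, Finset.sum_ite_eq', Finset.mem_univ, if_true, inv_two_pow_two_pow]
  ring

lemma combinedCh_nonneg (hW : ∀ x y, 0 ≤ W x y) (u : Fin (2 ^ n) → ZMod 2)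
    (y : Fin (2 ^ n) → Y) : 0 ≤ combinedCh n W u y :=
  Finset.prod_nonneg fun _ _ => hW _ _

lemma splitCh_nonneg (hW : ∀ x y, 0 ≤ W x y) (i : Fin (2 ^ n)) (b : ZMod 2)
    (o : (Fin (2 ^ n) → Y) × (Fin i.val → ZMod 2)) : 0 ≤ splitCh n W i b o :=
  Finset.sum_nonneg fun u _ => by
    split_ifs
    exacts [mul_nonneg (by positivity) (combinedCh_nonneg hW u o.1), le_rfl]

lemma sum_ite_splitCh_le_eq_mlErrorProb (i : Fin (2 ^ n)) :
    ∑ u, ∑ y, (if splitCh n W i (u i) (y, prefixAt u i) ≤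
        splitCh n W i (u i + 1) (y, prefixAt u i)
      then ((2 : ℝ) ^ (2 ^ n : ℕ))⁻¹ * combinedCh n W u y else 0) =
      mlErrorProb (splitCh n W i) := by
  simpa only [boole_mul, mlErrorProb] using sum_mul_combinedCh_eq_sum_mul_splitCh i
    fun o b => if splitCh n W i b o ≤ splitCh n W i (b + 1) o then 1 else 0

end Polar

/-- The block error probability of the SC decoder—with the input vector `U₁^N`
uniformly distributed on `{0,1}^N` (equivalently, uniformly random frozen vector and
uniformly random message bits) and `Y₁^N` generated through the combined channel
`W_N`—satisfies `P(Û_𝒜 ≠ U_𝒜) ≤ Σ_{i ∈ 𝒜} Z(W_N^{(i)})`, where `𝒜 = Fᶜ`. -/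
theorem sc_block_error_le_sum_bhatt {Y : Type*} [Fintype Y] (n : ℕ)
    (W : ZMod 2 → Y → ℝ) (hW : IsBDMC W) (F : Finset (Fin (2 ^ n))) :
    (∑ u : Fin (2 ^ n) → ZMod 2, ∑ y : Fin (2 ^ n) → Y,
        if ∃ i ∈ Fᶜ, scDecode n W F u y i ≠ u i then
          ((2 : ℝ) ^ (2 ^ n : ℕ))⁻¹ * combinedCh n W u y
        else 0) ≤
      ∑ i ∈ Fᶜ, bhatt (splitCh n W i) := by
  calc _ ≤ ∑ u, ∑ y, ∑ i ∈ Fᶜ, if splitCh n W i (u i) (y, prefixAt u i) ≤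
          splitCh n W i (u i + 1) (y, prefixAt u i)
        then ((2 : ℝ) ^ (2 ^ n : ℕ))⁻¹ * combinedCh n W u y else 0 :=
      Finset.sum_le_sum fun u _ => Finset.sum_le_sum fun y _ =>
        ite_le_sum_ite (mul_nonneg (by positivity) (combinedCh_nonneg hW.1 u y))
          exists_splitCh_le_of_scDecode_ne
    _ = ∑ i ∈ Fᶜ, mlErrorProb (splitCh n W i) := by
      simp only [← sum_ite_splitCh_le_eq_mlErrorProb]
      exact (Finset.sum_congr rfl fun _ _ => Finset.sum_comm).trans Finset.sum_comm
    _ ≤ ∑ i ∈ Fᶜ, bhatt (splitCh n W i) :=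
      Finset.sum_le_sum fun i _ => mlErrorProb_le_bhatt (splitCh_nonneg hW.1 i)
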